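/- Let G be a group, H a normal subgroup acting trivially on a G-module A, and Q = G/H with the induced action on A. Let Cor : H₁(H, A) → H₁(G, A) be the map induced by extending 1-cycles on H by zero to G, and let coinf : H₁(G, A) → H₁(Q, A) be the map induced by sending a 1-cycle x : G → A to the 1-cycle q ↦ ∑_{w ∈ G, wH = q} x(w). Then the sequence H₁(H, A) → H₁(G, A) → H₁(Q, A) → 0 is exact: coinf is surjective and its kernel equals the image of Cor. -/

import Mathlib

section Homology

/-- The map sending a finitely supported function `x : G →₀ A` to
`∑ g, (g⁻¹ • x g - x g)`; its kernel is the group of 1-cycles. -/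
noncomputable def paperCycleMap (G A : Type*) [Group G] [AddCommGroup A]
    [DistribMulAction G A] : (G →₀ A) →+ A :=
  Finsupp.liftAddHom fun g => DistribMulAction.toAddMonoidHom A g⁻¹ - AddMonoidHom.id A

/-- The group of 1-cycles: finitely supported `x : G →₀ A` with
`∑ g, g⁻¹ • x g = ∑ g, x g`. -/
noncomputable def paperZ1 (G A : Type*) [Group G] [AddCommGroup A]
    [DistribMulAction G A] : AddSubgroup (G →₀ A) :=
  (paperCycleMap G A).ker

/-- The boundary map of the inhomogeneous bar complex in degree 2: a basis element
`[g₁|g₂]` with coefficient `a` goes to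
`single g₂ (g₁⁻¹ • a) - single (g₁g₂) a + single g₁ a`. -/
noncomputable def paperBarD2 (G A : Type*) [Group G] [AddCommGroup A]
    [DistribMulAction G A] : ((G × G) →₀ A) →+ (G →₀ A) :=
  Finsupp.liftAddHom fun p =>
    (Finsupp.singleAddHom p.2).comp (DistribMulAction.toAddMonoidHom A p.1⁻¹)
      + Finsupp.singleAddHom p.1 - Finsupp.singleAddHom (p.1 * p.2)

/-- The group of 1-boundaries. -/
noncomputable def paperB1 (G A : Type*) [Group G] [AddCommGroup A]
    [DistribMulAction G A] : AddSubgroup (G →₀ A) :=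
  (paperBarD2 G A).range

/-- First group homology `H₁(G, A)`: 1-cycles modulo 1-boundaries. -/
noncomputable abbrev paperH1 (G A : Type*) [Group G] [AddCommGroup A]
    [DistribMulAction G A] :=
  paperZ1 G A ⧸ ((paperB1 G A).addSubgroupOf (paperZ1 G A))

end Homology

/-!
A group map compatible with the actions pushes chains forward and induces a map on `H₁`;
`Cor` and `coinf` are the maps induced by `H ↪ G` and `G ↠ Q`. A set-theoretic section of
`G ↠ Q` pushes cycles of `Q` back to `G`, giving surjectivity. The composite `H → Q` is trivial,
and chains supported at `1` are boundaries (`∂[1|1] = [1]`), so `coinf ∘ Cor = 0`. Conversely, if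
the image of `x` in `Q` bounds `z`, subtracting the boundary of a lift of `z` leaves a chain whose
coset sums vanish. Writing `g = r g * t g` with `r g` the chosen coset representative and
`t g ∈ H`, the boundaries `∂(a[r g | t g]) = ((r g)⁻¹ • a)[t g] + a[r g] - a[g]` move it onto `H`
(the `[r g]` terms cancel because coset sums vanish), and there every chain is a cycle because `H`
acts trivially.
-/

open Finsupp

section BarComplex

variable {G A : Type*} [Group G] [AddCommGroup A] [DistribMulAction G A]

lemma paperCycleMap_apply (x : G →₀ A) :
    paperCycleMap G A x = x.sum fun g a => g⁻¹ • a - a := by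
  rw [paperCycleMap, liftAddHom_apply]
  rfl

lemma paperBarD2_single (g₁ g₂ : G) (a : A) :
    paperBarD2 G A (single (g₁, g₂) a)
      = single g₂ (g₁⁻¹ • a) + single g₁ a - single (g₁ * g₂) a := by
  simp [paperBarD2]

lemma mem_paperZ1_of_smul_eq_self (h : ∀ (g : G) (a : A), g • a = a) (x : G →₀ A) :
    x ∈ paperZ1 G A := by
  change paperCycleMap G A x = 0
  rw [paperCycleMap_apply]
  exact Finset.sum_eq_zero fun g _ => sub_eq_zero.mpr (h _ _)

lemma single_one_mem_paperB1 (a : A) : single 1 a ∈ paperB1 G A :=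
  ⟨single (1, 1) a, by simp [paperBarD2_single]⟩

end BarComplex

section Functoriality

variable {G G' A : Type*} [Group G] [Group G'] [AddCommGroup A] [DistribMulAction G A]
  [DistribMulAction G' A]

lemma inv_smul_eq_of_forall_smul_eq {f : G' → G} (hf : ∀ (g : G') (a : A), f g • a = g • a)
    (g : G') (a : A) : (f g)⁻¹ • a = g⁻¹ • a := by
  rw [inv_smul_eq_iff, hf, smul_inv_smul]

lemma paperCycleMap_mapDomain {f : G' → G} (hf : ∀ (g : G') (a : A), f g • a = g • a)
    (x : G' →₀ A) : paperCycleMap G A (mapDomain f x) = paperCycleMap G' A x := by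
  rw [paperCycleMap_apply, paperCycleMap_apply, sum_mapDomain_index (by simp)
    fun _ _ _ => by rw [smul_add]; abel]
  simp only [inv_smul_eq_of_forall_smul_eq hf]

lemma mapDomain_mem_paperZ1 {f : G' → G} (hf : ∀ (g : G') (a : A), f g • a = g • a)
    {x : G' →₀ A} (hx : x ∈ paperZ1 G' A) : mapDomain f x ∈ paperZ1 G A :=
  (paperCycleMap_mapDomain hf x).trans hx

lemma mapDomain_paperBarD2 {φ : G' →* G} (hφ : ∀ (g : G') (a : A), φ g • a = g • a)
    (z : (G' × G') →₀ A) :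
    mapDomain φ (paperBarD2 G' A z) = paperBarD2 G A (mapDomain (Prod.map φ φ) z) := by
  induction z using Finsupp.induction_linear with
  | zero => simp
  | add z₁ z₂ h₁ h₂ => simp only [map_add, mapDomain_add, h₁, h₂]
  | single p a =>
    obtain ⟨g₁, g₂⟩ := p
    simp only [mapDomain_single, Prod.map_apply, paperBarD2_single, mapDomain_add, mapDomain_sub,
      map_mul, inv_smul_eq_of_forall_smul_eq hφ]

lemma mapDomain_mem_paperB1 {φ : G' →* G} (hφ : ∀ (g : G') (a : A), φ g • a = g • a)
    {x : G' →₀ A} (hx : x ∈ paperB1 G' A) : mapDomain φ x ∈ paperB1 G A := by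
  obtain ⟨z, rfl⟩ := hx
  exact ⟨_, (mapDomain_paperBarD2 hφ z).symm⟩

noncomputable def paperZ1Map (f : G' → G) (hf : ∀ (g : G') (a : A), f g • a = g • a) :
    paperZ1 G' A →+ paperZ1 G A :=
  ((mapDomain.addMonoidHom f).comp (paperZ1 G' A).subtype).codRestrict _
    fun x => mapDomain_mem_paperZ1 hf x.2

noncomputable def paperH1Map (φ : G' →* G) (hφ : ∀ (g : G') (a : A), φ g • a = g • a) :
    paperH1 G' A →+ paperH1 G A :=
  QuotientAddGroup.map _ _ (paperZ1Map φ hφ) fun _ hx => mapDomain_mem_paperB1 hφ hx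

lemma paperH1Map_mk {φ : G' →* G} (hφ : ∀ (g : G') (a : A), φ g • a = g • a)
    (x : paperZ1 G' A) :
    paperH1Map φ hφ (QuotientAddGroup.mk x)
      = QuotientAddGroup.mk ⟨mapDomain φ (x : G' →₀ A), mapDomain_mem_paperZ1 hφ x.2⟩ :=
  rfl

lemma paperH1Map_surjective {φ : G' →* G} (hφ : ∀ (g : G') (a : A), φ g • a = g • a)
    (hsurj : Function.Surjective φ) : Function.Surjective (paperH1Map φ hφ) := by
  have hs (g : G) (a : A) : Function.surjInv hsurj g • a = g • a := by
    simpa only [Function.surjInv_eq] using (hφ (Function.surjInv hsurj g) a).symm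
  intro c
  obtain ⟨y, rfl⟩ := QuotientAddGroup.mk_surjective c
  refine ⟨QuotientAddGroup.mk ⟨mapDomain (Function.surjInv hsurj) y, mapDomain_mem_paperZ1 hs y.2⟩,
    ?_⟩
  rw [paperH1Map_mk]
  congr 2
  rw [← mapDomain_comp, (Function.rightInverse_surjInv hsurj).comp_eq_id, mapDomain_id]

lemma paperH1Map_paperH1Map_eq_zero {G'' : Type*} [Group G''] [DistribMulAction G'' A]
    {φ : G' →* G} {ψ : G'' →* G'} (hφ : ∀ (g : G') (a : A), φ g • a = g • a)
    (hψ : ∀ (g : G'') (a : A), ψ g • a = g • a) (hφψ : ∀ g, φ (ψ g) = 1) (c : paperH1 G'' A) :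
    paperH1Map φ hφ (paperH1Map ψ hψ c) = 0 := by
  obtain ⟨x, rfl⟩ := QuotientAddGroup.mk_surjective c
  rw [paperH1Map_mk, paperH1Map_mk, QuotientAddGroup.eq_zero_iff, AddSubgroup.mem_addSubgroupOf]
  change mapDomain φ (mapDomain ψ (x : G'' →₀ A)) ∈ paperB1 G A
  rw [← mapDomain_comp, show ⇑φ ∘ ⇑ψ = fun _ => 1 from funext hφψ]
  exact AddSubmonoidClass.finsuppSum_mem _ _ _ fun _ _ => single_one_mem_paperB1 _

end Functoriality

lemma mapDomain_subtypeVal_subtypeDomain {α M : Type*} [AddCommMonoid M] {p : α → Prop}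
    [DecidablePred p] {w : α →₀ M} (hw : ∀ a, ¬p a → w a = 0) :
    mapDomain Subtype.val (w.subtypeDomain p) = w := by
  ext a
  by_cases ha : p a
  · exact mapDomain_apply Subtype.val_injective _ ⟨a, ha⟩
  · rw [mapDomain_of_notMem_range _ _ (by simpa), hw a ha]

section Extension

variable {G A : Type*} [Group G] [AddCommGroup A] [DistribMulAction G A]

lemma exists_sub_mem_paperB1_of_mapDomain_mk_eq_zero (K : Subgroup G) {x : G →₀ A}
    (hx : mapDomain (QuotientGroup.mk : G → G ⧸ K) x = 0) :
    ∃ w : G →₀ A, (∀ g ∉ K, w g = 0) ∧ w - x ∈ paperB1 G A := by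
  set r : G → G := fun g => (g : G ⧸ K).out
  have hr (g : G) : (r g)⁻¹ * g ∈ K := QuotientGroup.eq.mp (QuotientGroup.out_eq' _)
  have hrx : mapDomain r x = 0 := by
    rw [show r = Quotient.out ∘ QuotientGroup.mk from rfl, mapDomain_comp, hx, mapDomain_zero]
  refine ⟨x.sum fun g a => single ((r g)⁻¹ * g) ((r g)⁻¹ • a), fun g hg => ?_,
    x.sum fun g a => single (r g, (r g)⁻¹ * g) a, ?_⟩
  · rw [Finsupp.sum_apply]
    exact Finset.sum_eq_zero fun g' _ => single_eq_of_ne' fun h => hg (h ▸ hr g')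
  · rw [map_finsuppSum]
    simp only [paperBarD2_single, mul_inv_cancel_left]
    rw [sum_sub, sum_add, sum_single]
    change _ + mapDomain r x - x = _
    rw [hrx, add_zero]

variable (H : Subgroup G) [H.Normal] [DistribMulAction (G ⧸ H) A]

lemma paperH1Map_mk'_eq_zero_iff (htriv : ∀ h ∈ H, ∀ a : A, h • a = a)
    (hcomp : ∀ (g : G) (a : A), QuotientGroup.mk' H g • a = g • a) (c : paperH1 G A) :
    paperH1Map (QuotientGroup.mk' H) hcomp c = 0
      ↔ c ∈ (paperH1Map H.subtype fun _ _ => rfl).range := by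
  classical
  refine ⟨fun hc => ?_, ?_⟩
  · obtain ⟨x, rfl⟩ := QuotientAddGroup.mk_surjective c
    rw [paperH1Map_mk, QuotientAddGroup.eq_zero_iff, AddSubgroup.mem_addSubgroupOf] at hc
    obtain ⟨z, hz⟩ := hc
    set zt := mapDomain (Prod.map Quotient.out Quotient.out) z
    have hzt : mapDomain (QuotientGroup.mk' H) ((x : G →₀ A) - paperBarD2 G A zt) = 0 := by
      have hout : ⇑(QuotientGroup.mk' H) ∘ Quotient.out = id := funext QuotientGroup.out_eq'
      rw [mapDomain_sub, mapDomain_paperBarD2 hcomp, ← mapDomain_comp, Prod.map_comp_map, hout,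
        Prod.map_id, mapDomain_id]
      exact sub_eq_zero.mpr hz.symm
    obtain ⟨w, hwH, hw⟩ := exists_sub_mem_paperB1_of_mapDomain_mk_eq_zero H hzt
    have hwx : w - x ∈ paperB1 G A := by
      convert sub_mem hw ⟨zt, rfl⟩ using 1
      abel
    refine ⟨QuotientAddGroup.mk ⟨w.subtypeDomain (· ∈ H),
      mem_paperZ1_of_smul_eq_self (fun (h : H) => htriv h h.2) _⟩, (paperH1Map_mk _ _).trans ?_⟩
    rw [QuotientAddGroup.eq, AddSubgroup.mem_addSubgroupOf]
    change -mapDomain Subtype.val (w.subtypeDomain (· ∈ H)) + x ∈ paperB1 G A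
    rw [mapDomain_subtypeVal_subtypeDomain hwH, neg_add_eq_sub, ← neg_sub]
    exact neg_mem hwx
  · rintro ⟨d, rfl⟩
    exact paperH1Map_paperH1Map_eq_zero _ _ (fun (h : H) => (QuotientGroup.eq_one_iff _).mpr h.2) d

end Extension

/-- Let `G` be a group, `H` a normal subgroup acting trivially on the
`G`-module `A`, and `Q = G/H`.  With `Cor : H₁(H, A) → H₁(G, A)` induced by extension of
1-cycles by zero and `coinf : H₁(G, A) → H₁(Q, A)` induced by
`x ↦ (q ↦ ∑_{wH = q} x w)`, the sequence `H₁(H, A) → H₁(G, A) → H₁(Q, A) → 0` is exact: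
`coinf` is surjective and its kernel is the image of `Cor`. -/
theorem stmt6 {G : Type} [Group G] (H : Subgroup G) [H.Normal] (A : Type) [AddCommGroup A]
    [DistribMulAction G A] [DistribMulAction (G ⧸ H) A] [DecidableEq (G ⧸ H)]
    (hcomp : ∀ (g : G) (a : A), (g : G ⧸ H) • a = g • a)
    (htriv : ∀ h ∈ H, ∀ a : A, h • a = a)
    (Cor : paperH1 (↥H) A →+ paperH1 G A)
    (hCor : ∀ (x : paperZ1 (↥H) A) (xt : paperZ1 G A),
      (∀ h : ↥H, (xt : G →₀ A) (h : G) = (x : (↥H) →₀ A) h) →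
      (∀ g : G, g ∉ H → (xt : G →₀ A) g = 0) →
      Cor (QuotientAddGroup.mk x) = QuotientAddGroup.mk xt)
    (coinf : paperH1 G A →+ paperH1 (G ⧸ H) A)
    (hcoinf : ∀ (x : paperZ1 G A) (y : paperZ1 (G ⧸ H) A),
      (∀ q : G ⧸ H, (y : (G ⧸ H) →₀ A) q
          = ∑ w ∈ (x : G →₀ A).support.filter (fun w : G => (w : G ⧸ H) = q),
              (x : G →₀ A) w) →
      coinf (QuotientAddGroup.mk x) = QuotientAddGroup.mk y) :
    Function.Surjective coinf ∧ ∀ c : paperH1 G A, coinf c = 0 ↔ c ∈ Cor.range := by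
  have hCor_eq : Cor = paperH1Map H.subtype fun _ _ => rfl :=
    QuotientAddGroup.addMonoidHom_ext _ <| AddMonoidHom.ext fun x =>
      hCor x _ (fun h => mapDomain_apply Subtype.val_injective _ h)
        fun g hg => mapDomain_of_notMem_range _ g (by simpa using hg)
  have hcoinf_eq : coinf = paperH1Map (QuotientGroup.mk' H) hcomp :=
    QuotientAddGroup.addMonoidHom_ext _ <| AddMonoidHom.ext fun x => hcoinf x _ fun q => by
      obtain ⟨g, rfl⟩ := QuotientGroup.mk_surjective q
      exact mapDomain_apply_eq_sum _ _
  subst hCor_eq hcoinf_eq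
  exact ⟨paperH1Map_surjective _ (QuotientGroup.mk'_surjective H),
    paperH1Map_mk'_eq_zero_iff H htriv hcomp⟩
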